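/- arXiv:1305.4263 — 3 statements merged into one kernel-verified Lean document; each statement's English description precedes it below -/
import Mathlib

section
/- Let d be a positive integer, K = d² + 1, and X = {1, ..., K}. Define labels as pairs (z, A) with z ∈ X and A ⊆ X, |A| ≤ d. Define (z, A) ≺ (z', A') iff z ∈ A' and z' ∉ A. For labels l_1 = (s_1, A_1), ..., l_r = (s_r, A_r) with r ≤ d, let s = min(X \ (A_1 ∪ ... ∪ A_r)) and A = {s_1, ..., s_r}, and ν(l_1,...,l_r) = (s, A). Then ν is well-defined (the set X \ (A_1 ∪ ... ∪ A_r) is non-empty, and |A| ≤ d) and for every i with 1 ≤ i ≤ r, l_i ≺ ν(l_1,...,l_r). -/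
/-! The at most `d` antisting sets cover at most `d * d < d ^ 2 + 1` points of `X`, so the minimum
`s` of the rest exists, and it lies in no antisting set; the stings are at most `d` in number. -/

open Finset

theorem Finset.card_biUnion_univ_le_sq {ι β : Type*} [Fintype ι] [DecidableEq β] {d : ℕ}
    (t : ι → Finset β) (hι : Fintype.card ι ≤ d) (ht : ∀ i, #(t i) ≤ d) :
    #(univ.biUnion t) ≤ d ^ 2 :=
  calc #(univ.biUnion t) ≤ #(univ : Finset ι) * d := card_biUnion_le_card_mul _ _ _ fun i _ => ht i
    _ ≤ d * d := Nat.mul_le_mul_right d (by simpa using hι)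
    _ = d ^ 2 := (sq d).symm

theorem stmt_3_general (d : ℕ) (K : ℕ) (hK : K = d ^ 2 + 1)
    (X : Finset ℕ) (hX : X = Finset.Icc 1 K)
    (r : ℕ) (hr : r ≤ d) (l : Fin r → ℕ × Finset ℕ)
    (hcard : ∀ i, (l i).2.card ≤ d) :
    let U : Finset ℕ := Finset.univ.biUnion (fun i => (l i).2)
    let s : ℕ := sInf {x : ℕ | x ∈ X \ U}
    let A : Finset ℕ := Finset.image (fun i => (l i).1) Finset.univ
    (X \ U).Nonempty ∧ A.card ≤ d ∧
      ∀ i, (l i).1 ∈ A ∧ s ∉ (l i).2 := by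
  intro U s A
  have hU : #U ≤ d ^ 2 := card_biUnion_univ_le_sq _ (by simpa using hr) hcard
  have hne : (X \ U).Nonempty := sdiff_nonempty_of_card_lt_card (by simp [hX, hK]; omega)
  have hs : s ∈ X \ U := Nat.sInf_mem hne
  refine ⟨hne, card_image_le.trans (by simpa using hr), fun i => ⟨?_, fun hi => ?_⟩⟩
  · exact mem_image_of_mem _ (mem_univ i)
  · exact (mem_sdiff.1 hs).2 (mem_biUnion.2 ⟨i, mem_univ i, hi⟩)

/-- The sting-antistings label increment function is well-defined and produces
a label greater than each of its (at most d) arguments. -/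
theorem stmt_3 (d : ℕ) (hd : 0 < d) (K : ℕ) (hK : K = d ^ 2 + 1)
    (X : Finset ℕ) (hX : X = Finset.Icc 1 K)
    (r : ℕ) (hr : r ≤ d) (l : Fin r → ℕ × Finset ℕ)
    (hsting : ∀ i, (l i).1 ∈ X) (hanti : ∀ i, (l i).2 ⊆ X)
    (hcard : ∀ i, (l i).2.card ≤ d) :
    let U : Finset ℕ := Finset.univ.biUnion (fun i => (l i).2)
    let s : ℕ := sInf {x : ℕ | x ∈ X \ U}
    let A : Finset ℕ := Finset.image (fun i => (l i).1) Finset.univ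
    (X \ U).Nonempty ∧ A.card ≤ d ∧
      ∀ i, (l i).1 ∈ A ∧ s ∉ (l i).2 :=
  stmt_3_general d K hK X hX r hr l hcard
end

section
/- Let T_λ = (Σ_{μ<λ} R_μ + 1) · (|λ|+1) · (K^cl + 1) · (K + 1), where |λ| is the number of identifiers μ ≤ λ and R_μ = (J_μ+1)(K+1) − 1. Given a sequence of T_λ interrupts where the number of interrupts of type [μ,←] is at most R_μ for each μ < λ, there exists a consecutive subsequence of length (|λ|+1)·(K^cl+1)·(K+1) containing no interrupt of type [μ,←] for any μ < λ; and within it, a consecutive subsequence of length (K^cl+1)·(K+1) containing additionally no interrupt of type [μ,→] (of which there are at most |λ| in the outer subsequence). -/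
open scoped Classical

/-- Interrupt types: [μ,←], [μ,→] for identifiers μ < λ, and [λ,max], [λ,cl]. -/
inductive Intr (I : Type*) where
  | left (μ : I)
  | right (μ : I)
  | max
  | cl

/-!
Pigeonhole twice, with `b = (Kcl + 1) (K + 1)`. At most `∑ R μ` left interrupts occur in `[1, T]`, so among the `∑ R μ + 1`
consecutive blocks of length `(|ids| + 2) b` one contains none. That block contains at most
`|ids| + 1` right interrupts, so among its `|ids| + 2` sub-blocks of length `b` one contains none.
-/

open Finset

theorem exists_Ico_forall_not_of_card_filter_lt (P : ℕ → Prop) [DecidablePred P] (a b : ℕ) :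
    ∀ n, #{i ∈ Ico a (a + n * b) | P i} < n →
      ∃ c, a ≤ c ∧ c + b ≤ a + n * b ∧ ∀ i ∈ Ico c (c + b), ¬ P i
  | 0, h => absurd h (Nat.not_lt_zero _)
  | n + 1, h => by
    have hsucc : a + (n + 1) * b = a + n * b + b := by ring
    rw [hsucc] at h ⊢
    by_cases hlast : ∃ i ∈ Ico (a + n * b) (a + n * b + b), P i
    · obtain ⟨j, hj, hPj⟩ := hlast
      have hlast_pos : 0 < #{i ∈ Ico (a + n * b) (a + n * b + b) | P i} :=
        card_pos.2 ⟨j, mem_filter.2 ⟨hj, hPj⟩⟩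
      rw [← Ico_union_Ico_eq_Ico (b := a + n * b) (by omega) (by omega), filter_union,
        card_union_of_disjoint
          (disjoint_filter_filter (Ico_disjoint_Ico_consecutive _ _ _))] at h
      obtain ⟨c, hac, hcb, hc⟩ := exists_Ico_forall_not_of_card_filter_lt P a b n (by omega)
      exact ⟨c, hac, by omega, hc⟩
    · exact ⟨a + n * b, by omega, le_rfl, fun i hi hPi => hlast ⟨i, hi, hPi⟩⟩

theorem card_filter_exists_le_sum_card_filter {α ι : Type*} (S : Finset α) (t : Finset ι)
    (p : ι → α → Prop) [∀ μ, DecidablePred (p μ)] [DecidablePred fun x => ∃ μ, p μ x]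
    (hp : ∀ x ∈ S, ∀ μ, p μ x → μ ∈ t) :
    #{x ∈ S | ∃ μ, p μ x} ≤ ∑ μ ∈ t, #{x ∈ S | p μ x} := by
  calc #{x ∈ S | ∃ μ, p μ x}
      ≤ #(t.biUnion fun μ => {x ∈ S | p μ x}) := by
        refine card_le_card fun x hx => ?_
        obtain ⟨hxS, μ, hμ⟩ := mem_filter.1 hx
        exact mem_biUnion.2 ⟨μ, hp x hxS μ hμ, mem_filter.2 ⟨hxS, hμ⟩⟩
    _ ≤ ∑ μ ∈ t, #{x ∈ S | p μ x} := card_biUnion_le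

/-- Nested pigeonhole on interrupt sequences: in T_λ interrupts with at most
R_μ interrupts [μ,←] for each μ < λ, there is a block of length
(|λ|+1)(K^cl+1)(K+1) free of [μ,←] interrupts, and inside it (since it contains
at most |λ| interrupts [μ,→]) a block of length (K^cl+1)(K+1) free of both
[μ,←] and [μ,→] interrupts. -/
theorem stmt_18 {I : Type*} (ids : Finset I) (R : I → ℕ) (K Kcl : ℕ)
    (T : ℕ)
    (hT : T = ((∑ μ ∈ ids, R μ) + 1) * (ids.card + 2) * (Kcl + 1) * (K + 1))
    (s : ℕ → Intr I)
    (hids : ∀ i μ, 1 ≤ i → i ≤ T → (s i = Intr.left μ ∨ s i = Intr.right μ) → μ ∈ ids)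
    (hleft : ∀ μ ∈ ids,
      ((Finset.Icc 1 T).filter (fun i => s i = Intr.left μ)).card ≤ R μ)
    (hright : ∀ a b, 1 ≤ a → b ≤ T →
      (∀ i μ, a ≤ i → i ≤ b → s i ≠ Intr.left μ) →
      ((Finset.Icc a b).filter (fun i => ∃ μ, s i = Intr.right μ)).card ≤ ids.card + 1) :
    ∃ i₀, 1 ≤ i₀ ∧ i₀ + (ids.card + 2) * (Kcl + 1) * (K + 1) - 1 ≤ T ∧
      (∀ i μ, i₀ ≤ i → i ≤ i₀ + (ids.card + 2) * (Kcl + 1) * (K + 1) - 1 →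
        s i ≠ Intr.left μ) ∧
      ∃ j₀, i₀ ≤ j₀ ∧
        j₀ + (Kcl + 1) * (K + 1) - 1 ≤ i₀ + (ids.card + 2) * (Kcl + 1) * (K + 1) - 1 ∧
        ∀ i μ, j₀ ≤ i → i ≤ j₀ + (Kcl + 1) * (K + 1) - 1 →
          s i ≠ Intr.left μ ∧ s i ≠ Intr.right μ := by
  have hT' : T = (∑ μ ∈ ids, R μ + 1) * ((ids.card + 2) * ((Kcl + 1) * (K + 1))) := by
    rw [hT]; ring
  have hb : 0 < (Kcl + 1) * (K + 1) := by positivity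
  rw [mul_assoc (ids.card + 2)]
  generalize (Kcl + 1) * (K + 1) = b at hb hT' ⊢
  have hB : 0 < (ids.card + 2) * b := by positivity
  obtain ⟨c, hc1, hcT, hc⟩ := exists_Ico_forall_not_of_card_filter_lt
    (fun i => ∃ μ, s i = .left μ) 1 ((ids.card + 2) * b) (∑ μ ∈ ids, R μ + 1) <| by
      rw [← hT', add_comm, Ico_add_one_right_eq_Icc]
      calc _ ≤ ∑ μ ∈ ids, #{i ∈ Icc 1 T | s i = .left μ} :=
            card_filter_exists_le_sum_card_filter _ _ _ fun i hi μ hμ =>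
              hids i μ (mem_Icc.1 hi).1 (mem_Icc.1 hi).2 (.inl hμ)
        _ ≤ ∑ μ ∈ ids, R μ := sum_le_sum hleft
        _ < _ := Nat.lt_succ_self _
  have hc_left : ∀ i μ, c ≤ i → i ≤ c + (ids.card + 2) * b - 1 → s i ≠ .left μ :=
    fun i μ h1 h2 hL => hc i (mem_Ico.2 ⟨h1, by omega⟩) ⟨μ, hL⟩
  obtain ⟨d, hcd, hdc, hd⟩ := exists_Ico_forall_not_of_card_filter_lt
    (fun i => ∃ μ, s i = .right μ) c b (ids.card + 2) <| by
      have := hright c (c + (ids.card + 2) * b - 1) hc1 (by omega) hc_left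
      rw [← Ico_add_one_right_eq_Icc, Nat.sub_add_cancel (by omega)] at this
      omega
  refine ⟨c, hc1, by omega, hc_left, d, hcd, by omega, fun i μ h1 h2 =>
    ⟨hc_left i μ (by omega) (by omega), fun hR => hd i (mem_Ico.2 ⟨h1, by omega⟩) ⟨μ, hR⟩⟩⟩
end

section
/- In the self-stabilizing failure detector, suppose that between any two consecutive receptions at processor α of heartbeats from a live processor β, strictly fewer than W heartbeats from other processors are received by α. Then after α's first reception of a heartbeat from β, the counter L_α[β] never reaches W; hence β never appears in the suspect list F_α = {μ : L_α[μ] = W} thereafter. -/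
/-!
At each heartbeat from `β` the counter `L_α[β]` is reset to `0`, and at every other event it grows
by at most one. Hence at time `k` it is bounded by the number of events strictly between the last
`β`-heartbeat `m < k` and `k`. None of these events comes from `β`, and all of them precede the next
`β`-heartbeat, so by the interleaving assumption there are fewer than `W` of them.
-/

theorem exists_last_lt {p : ℕ → Prop} {k₀ k : ℕ} (h₀ : p k₀) (hk : k₀ < k) :
    ∃ m < k, p m ∧ ∀ j, m < j → j < k → ¬ p j := by
  induction k, hk using Nat.le_induction with
  | base => exact ⟨k₀, k₀.lt_succ_self, h₀, fun j hj hj' => absurd hj' (by omega)⟩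
  | succ k _ ih =>
    by_cases hpk : p k
    · exact ⟨k, k.lt_succ_self, hpk, fun j hj hj' => absurd hj' (by omega)⟩
    · obtain ⟨m, hmk, hm, hgap⟩ := ih
      refine ⟨m, hmk.trans k.lt_succ_self, hm, fun j hmj hjk => ?_⟩
      rcases Nat.lt_succ_iff_lt_or_eq.mp hjk with hjk | rfl
      exacts [hgap j hmj hjk, hpk]

theorem counter_le_of_reset {ι : Type*} [DecidableEq ι] {W : ℕ} {β : ι} {e : ℕ → ι} {c : ℕ → ℕ}
    (hupd : ∀ k, c (k + 1) = if e k = β then 0 else if c k < W then c k + 1 else c k)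
    {m n : ℕ} (hm : e m = β) (hmn : m < n) : c n ≤ n - m - 1 := by
  induction n, hmn using Nat.le_induction with
  | base => simp [hupd, hm]
  | succ n _ ih =>
    have hstep : c (n + 1) ≤ c n + 1 := by
      rw [hupd]
      split_ifs <;> omega
    omega

theorem stmt_19_general {Id : Type*} [DecidableEq Id] (W : ℕ)
    (β : Id) (e : ℕ → Id) (L : ℕ → Id → ℕ)
    (hupd : ∀ k μ, L (k + 1) μ =
      if e k = μ then 0 else if L k μ < W then L k μ + 1 else L k μ)
    (hlive : ∀ k, ∃ k' > k, e k' = β)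
    (hinter : ∀ k₁ k₂, k₁ < k₂ → e k₁ = β → e k₂ = β →
      ((Finset.Ioo k₁ k₂).filter (fun j => e j ≠ β)).card < W) :
    ∀ k₀ k, e k₀ = β → k₀ < k → L k β < W := by
  intro k₀ k hk₀ hk
  obtain ⟨m, hmk, hm, hgap⟩ := exists_last_lt (p := (e · = β)) hk₀ hk
  obtain ⟨k', hkk', hk'⟩ := hlive k
  have hsub : Finset.Ioo m k ⊆ (Finset.Ioo m k').filter (fun j => e j ≠ β) := by
    intro j hj
    rw [Finset.mem_Ioo] at hj
    exact Finset.mem_filter.mpr ⟨Finset.mem_Ioo.mpr ⟨hj.1, hj.2.trans hkk'⟩, hgap j hj.1 hj.2⟩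
  calc L k β ≤ k - m - 1 := counter_le_of_reset (c := (L · β)) (fun n => hupd n β) hm hmk
    _ = (Finset.Ioo m k).card := (Nat.card_Ioo m k).symm
    _ ≤ _ := Finset.card_le_card hsub
    _ < W := hinter m k' (hmk.trans hkk') hm hk'

/-- Self-stabilizing failure detector: if between any two consecutive
receptions at α of heartbeats from the live processor β there are strictly
fewer than W receptions of heartbeats from other processors, then after the
first reception of a heartbeat from β the counter L_α[β] never reaches W, so β
is never suspected thereafter. -/
theorem stmt_19 {Id : Type*} [DecidableEq Id] (W : ℕ) (hW : 0 < W)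
    (β : Id) (e : ℕ → Id) (L : ℕ → Id → ℕ)
    (hinit : ∀ μ, L 0 μ ≤ W)
    (hupd : ∀ k μ, L (k + 1) μ =
      if e k = μ then 0 else if L k μ < W then L k μ + 1 else L k μ)
    (hlive : ∀ k, ∃ k' > k, e k' = β)
    (hinter : ∀ k₁ k₂, k₁ < k₂ → e k₁ = β → e k₂ = β →
      ((Finset.Ioo k₁ k₂).filter (fun j => e j ≠ β)).card < W) :
    ∀ k₀ k, e k₀ = β → k₀ < k → L k β < W :=
  stmt_19_general W β e L hupd hlive hinter
end
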